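/- arXiv:1010.3667 — 2 statements merged into one kernel-verified Lean document; each statement's English description precedes it below -/
import Mathlib

section
/- Let n ≥ 2 and let A, B, C ∈ ℂ. Define L = (L₁,…,L_n) : ℂⁿ → ℂⁿ by L_j(z) = A∑_{k=1}ⁿ z_k + Bz_j + C. Then there exists a unique polynomial mapping S_L : ℂⁿ → ℂⁿ such that π_n ∘ L = S_L ∘ π_n. -/
open Finset

/-- The symmetrization map `π_n : ℂⁿ → ℂⁿ`, whose `k`-th component is the
`(k+1)`-st elementary symmetric polynomial of the coordinates. -/
noncomputable def piMap (n : ℕ) (z : Fin n → ℂ) : Fin n → ℂ :=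
  fun k => ∑ s ∈ Finset.powersetCard (k.1 + 1) Finset.univ, ∏ j ∈ s, z j

/-- The generalized complex ellipsoid `𝔹_{p,n} = {z : ∑ |z_j|^(2p) < 1}`. -/
noncomputable def ellipsoid (p : ℝ) (n : ℕ) : Set (Fin n → ℂ) :=
  {z | ∑ j, ‖z j‖ ^ (2 * p) < 1}

/-- The symmetrized `(p,n)`-ellipsoid `𝔼_{p,n} = π_n(𝔹_{p,n})`. -/
noncomputable def symEllipsoid (p : ℝ) (n : ℕ) : Set (Fin n → ℂ) :=
  piMap n '' ellipsoid p n

/-- The Euclidean unit ball in `ℂⁿ`. -/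
def unitBall (n : ℕ) : Set (Fin n → ℂ) :=
  {z | ∑ j, ‖z j‖ ^ 2 < 1}

/-- `f` is a proper holomorphic map from the domain `D` onto (into) the domain `G`:
it is holomorphic on `D`, maps `D` into `G`, and preimages of compact subsets of `G`
are compact. -/
def IsProperHolomorphic {n : ℕ} (f : (Fin n → ℂ) → (Fin n → ℂ))
    (D G : Set (Fin n → ℂ)) : Prop :=
  DifferentiableOn ℂ f D ∧ Set.MapsTo f D G ∧
    ∀ K : Set (Fin n → ℂ), K ⊆ G → IsCompact K → IsCompact (D ∩ f ⁻¹' K)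

/-- `φ` is an automorphism of the domain `D`: a holomorphic bijection of `D` onto
itself with holomorphic inverse. -/
def IsAutomorphismOf {n : ℕ} (φ : (Fin n → ℂ) → (Fin n → ℂ))
    (D : Set (Fin n → ℂ)) : Prop :=
  DifferentiableOn ℂ φ D ∧ Set.BijOn φ D D ∧
    ∃ ψ : (Fin n → ℂ) → (Fin n → ℂ), DifferentiableOn ℂ ψ D ∧ Set.InvOn ψ φ D D

/-- `f : ℂⁿ → ℂⁿ` is a polynomial mapping. -/
def IsPolynomialMap {n : ℕ} (f : (Fin n → ℂ) → (Fin n → ℂ)) : Prop :=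
  ∃ P : Fin n → MvPolynomial (Fin n) ℂ, ∀ z k, f z k = MvPolynomial.eval z (P k)

open Polynomial
lemma aux_aeval_eq_eval {n : ℕ} (f : Fin n → ℂ) (p : MvPolynomial (Fin n) ℂ) :
    MvPolynomial.aeval f p = MvPolynomial.eval f p := by
  rw [← MvPolynomial.coe_aeval_eq_eval]; rfl

lemma piMap_eq_esymm (n : ℕ) (z : Fin n → ℂ) (k : Fin n) :
    piMap n z k = (Finset.univ.val.map z).esymm (k.1 + 1) := by
  rw [piMap, Finset.esymm_map_val]

lemma exists_fn (n : ℕ) (s : Multiset ℂ) (h : Multiset.card s = n) :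
    ∃ z : Fin n → ℂ, Multiset.map z Finset.univ.val = s := by
  obtain ⟨l, rfl⟩ : ∃ l : List ℂ, (l : Multiset ℂ) = s := ⟨s.toList, s.coe_toList⟩
  simp only [Multiset.coe_card] at h
  subst h
  refine ⟨l.get, ?_⟩
  have h1 : (Finset.univ.val : Multiset (Fin l.length)) = ↑(List.finRange l.length) := rfl
  rw [h1, Multiset.map_coe, List.map_get_finRange]

lemma piMap_surjective (n : ℕ) : Function.Surjective (piMap n) := by
  intro w
  set q : ℂ[X] := X ^ n + ∑ k : Fin n, Polynomial.C ((-1) ^ (k.1 + 1) * w k) * X ^ (n - 1 - k.1)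
    with hq
  have hdeg : (∑ k : Fin n, Polynomial.C ((-1) ^ (k.1 + 1) * w k) * X ^ (n - 1 - k.1)).degree
      < ((n : ℕ) : WithBot ℕ) := by
    apply lt_of_le_of_lt (Polynomial.degree_sum_le _ _)
    rw [Finset.sup_lt_iff (by exact_mod_cast WithBot.bot_lt_coe (n : ℕ))]
    intro k _
    apply lt_of_le_of_lt (degree_C_mul_X_pow_le _ _)
    have hk : n - 1 - k.1 < n := by have := k.2; omega
    exact_mod_cast hk
  have hmonic : q.Monic := Polynomial.monic_X_pow_add hdeg
  have hqdeg : q.natDegree = n := by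
    have : q.degree = n := by
      rw [hq, Polynomial.degree_add_eq_left_of_degree_lt (by rwa [Polynomial.degree_X_pow]),
        Polynomial.degree_X_pow]
    exact Polynomial.natDegree_eq_of_degree_eq_some this
  have hroots : Multiset.card q.roots = q.natDegree :=
    Polynomial.splits_iff_card_roots.mp (IsAlgClosed.splits q)
  have hcoeff : ∀ k : Fin n, w k = q.roots.esymm (k.1 + 1) := by
    intro k
    have hk1 : k.1 + 1 ≤ n := k.2
    have h1 : q.coeff (n - (k.1 + 1)) = (-1) ^ (k.1 + 1) * w k := by
      rw [hq, Polynomial.coeff_add, Polynomial.coeff_X_pow, if_neg (by omega),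
        Polynomial.finset_sum_coeff, zero_add]
      rw [Finset.sum_eq_single k]
      · rw [Polynomial.coeff_C_mul, Polynomial.coeff_X_pow, if_pos (by omega), mul_one]
      · intro j _ hj
        rw [Polynomial.coeff_C_mul, Polynomial.coeff_X_pow, if_neg (by
          intro hcontra
          apply hj
          have := j.2; have := k.2
          exact Fin.ext (by omega)), mul_zero]
      · intro hcontra; exact absurd (Finset.mem_univ k) hcontra
    have h2 := Polynomial.coeff_eq_esymm_roots_of_card hroots
      (k := n - (k.1 + 1)) (by omega)
    rw [h1, hmonic.leadingCoeff, one_mul, hqdeg] at h2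
    have h3 : n - (n - (k.1 + 1)) = k.1 + 1 := by omega
    rw [h3] at h2
    have hu : ((-1 : ℂ) ^ (k.1 + 1)) ≠ 0 := by
      simp [pow_ne_zero]
    field_simp at h2
    -- h2 : (-1)^(k+1) * w k = (-1)^(k+1) * esymm
    exact h2
  obtain ⟨z, hz⟩ := exists_fn n q.roots (by rw [hroots, hqdeg])
  refine ⟨z, funext fun k => ?_⟩
  rw [piMap_eq_esymm, hz, ← hcoeff k]

lemma piMap_eq_eval_esymm (n : ℕ) (z : Fin n → ℂ) (k : Fin n) :
    piMap n z k = MvPolynomial.eval z (MvPolynomial.esymm (Fin n) ℂ (k.1 + 1)) := by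
  rw [piMap_eq_esymm, ← aux_aeval_eq_eval, MvPolynomial.aeval_esymm_eq_multiset_esymm]


/-- For the affine symmetric map `L_j(z) = A ∑ z_k + B z_j + C` there is a
unique polynomial mapping `S_L` with `π_n ∘ L = S_L ∘ π_n`. -/
theorem exists_unique_S (n : ℕ) (hn : 2 ≤ n) (A B C : ℂ) :
    ∃! S : (Fin n → ℂ) → (Fin n → ℂ),
      IsPolynomialMap S ∧
      ∀ z : Fin n → ℂ,
        piMap n (fun j => A * ∑ k, z k + B * z j + C) = S (piMap n z) := by
  classical
  set Lp : Fin n → MvPolynomial (Fin n) ℂ :=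
    fun j => MvPolynomial.C A * (∑ i, MvPolynomial.X i) + MvPolynomial.C B * MvPolynomial.X j
      + MvPolynomial.C C with hLp
  set P : Fin n → MvPolynomial (Fin n) ℂ :=
    fun k => MvPolynomial.aeval Lp (MvPolynomial.esymm (Fin n) ℂ (k.1 + 1)) with hP
  have hLpe : ∀ (e : Equiv.Perm (Fin n)) (j : Fin n),
      MvPolynomial.rename e (Lp j) = Lp (e j) := by
    intro e j
    simp only [hLp, map_add, map_mul, MvPolynomial.rename_C, MvPolynomial.rename_X, map_sum]
    rw [Equiv.sum_comp e (MvPolynomial.X ·) |>.symm]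
  have hPsym : ∀ k, (P k).IsSymmetric := by
    intro k e
    have h1 : (MvPolynomial.rename (e : Fin n → Fin n)).comp (MvPolynomial.aeval Lp)
        = MvPolynomial.aeval (fun i => MvPolynomial.rename (e : Fin n → Fin n) (Lp i)) :=
      MvPolynomial.comp_aeval (f := Lp) (MvPolynomial.rename (e : Fin n → Fin n))
    calc MvPolynomial.rename e (P k)
        = MvPolynomial.aeval (fun i => MvPolynomial.rename e (Lp i))
            (MvPolynomial.esymm (Fin n) ℂ (k.1 + 1)) := by
          rw [hP, ← h1]; rfl
      _ = MvPolynomial.aeval (Lp ∘ e) (MvPolynomial.esymm (Fin n) ℂ (k.1 + 1)) := by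
          simp only [hLpe]; rfl
      _ = MvPolynomial.aeval Lp
            (MvPolynomial.rename e (MvPolynomial.esymm (Fin n) ℂ (k.1 + 1))) := by
          rw [MvPolynomial.aeval_rename]
      _ = P k := by rw [MvPolynomial.esymm_isSymmetric (Fin n) ℂ _ e]
  have hsurj := MvPolynomial.esymmAlgHom_surjective (σ := Fin n) (R := ℂ) (n := n)
    (by simp)
  have hR : ∀ k, ∃ r : MvPolynomial (Fin n) ℂ,
      MvPolynomial.aeval (fun i : Fin n => MvPolynomial.esymm (Fin n) ℂ (i + 1)) r = P k := by
    intro k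
    obtain ⟨r, hr⟩ := hsurj ⟨P k, hPsym k⟩
    exact ⟨r, by rw [← MvPolynomial.esymmAlgHom_apply, hr]⟩
  choose Rf hRf using hR
  have hmain : ∀ (z : Fin n → ℂ) (k : Fin n),
      piMap n (fun j => A * ∑ i, z i + B * z j + C) k = MvPolynomial.eval (piMap n z) (Rf k) := by
    intro z k
    have key : MvPolynomial.eval (piMap n z) (Rf k) = MvPolynomial.eval z (P k) := by
      have h1 : piMap n z = fun i : Fin n =>
          MvPolynomial.aeval z (MvPolynomial.esymm (Fin n) ℂ (i.1 + 1)) := by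
        funext i; rw [piMap_eq_eval_esymm, aux_aeval_eq_eval]
      rw [← aux_aeval_eq_eval, ← aux_aeval_eq_eval, h1, ← hRf k]
      have := MvPolynomial.aeval_bind₁ (R := ℂ) z
        (fun i : Fin n => MvPolynomial.esymm (Fin n) ℂ (i + 1)) (Rf k)
      rw [← this]; rfl
    rw [key, hP]; beta_reduce
    have h2 : ∀ j, MvPolynomial.eval z (Lp j) = A * ∑ i, z i + B * z j + C := by
      intro j; simp [hLp]
    rw [← aux_aeval_eq_eval]
    have h3 := MvPolynomial.aeval_bind₁ (R := ℂ) z Lp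
      (MvPolynomial.esymm (Fin n) ℂ (k.1 + 1))
    have h4 : MvPolynomial.aeval Lp (MvPolynomial.esymm (Fin n) ℂ (k.1 + 1))
        = MvPolynomial.bind₁ Lp (MvPolynomial.esymm (Fin n) ℂ (k.1 + 1)) := rfl
    rw [h4, h3]
    have h5 : (fun i => MvPolynomial.aeval z (Lp i))
        = fun j => A * ∑ i, z i + B * z j + C := by
      funext j; rw [aux_aeval_eq_eval, h2 j]
    rw [h5, piMap_eq_eval_esymm, ← aux_aeval_eq_eval]
  refine ⟨fun w k => MvPolynomial.eval w (Rf k), ⟨⟨Rf, fun z k => rfl⟩, ?_⟩, ?_⟩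
  · intro z
    funext k
    exact hmain z k
  · intro S' ⟨_, hS'⟩
    funext w
    obtain ⟨z, rfl⟩ := piMap_surjective n w
    rw [← hS' z]
    funext k
    exact hmain z k
end

section
/- Let n ≥ 2 and p > 0. The restriction of π_n to 𝔹_{p,n} is a proper holomorphic mapping from 𝔹_{p,n} onto 𝔼_{p,n}, and π_n maps the boundary ∂𝔹_{p,n} onto the boundary ∂𝔼_{p,n}. -/
open Finset

/-
Vieta's formulas identify the fibres of `π_n` with the orbits of the coordinate permutations, so
`𝔹_{p,n}` is a union of fibres. Cauchy's bound on the roots of `∏ (X - z_j)` gives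
`‖z‖ < ‖π_n z‖ + 1`, so `π_n` is a proper, hence closed, map of `ℂⁿ`, and it is onto because `ℂ`
is algebraically closed. A closed continuous surjection maps an open union of fibres onto an open
set, and its boundary onto the boundary of the image.
-/

open Polynomial

theorem IsClosedMap.image_frontier_of_preimage_image_eq {X Y : Type*} [TopologicalSpace X]
    [TopologicalSpace Y] {f : X → Y} (hf : IsClosedMap f) (hcont : Continuous f)
    (hsurj : Function.Surjective f) {U : Set X} (hU : IsOpen U)
    (hsat : f ⁻¹' (f '' U) = U) :
    f '' frontier U = frontier (f '' U) := by
  have hopen : IsOpen (f '' U) :=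
    (hf.isQuotientMap hcont hsurj).isOpen_preimage.1 (by rwa [hsat])
  have hclosure : closure (f '' U) = f '' closure U :=
    (hf.closure_image_subset U).antisymm (image_closure_subset_closure_image hcont)
  rw [hU.frontier_eq, hopen.frontier_eq, hclosure, ← Set.image_sdiff_preimage, hsat]

theorem Multiset.exists_univ_map_eq_of_card_eq {α : Type*} {n : ℕ} {s : Multiset α}
    (hs : Multiset.card s = n) : ∃ z : Fin n → α, univ.val.map z = s := by
  obtain ⟨l, rfl⟩ : ∃ l : List α, (l : Multiset α) = s := ⟨s.toList, s.coe_toList⟩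
  rw [Multiset.coe_card] at hs
  subst hs
  exact ⟨l.get, by rw [Fin.univ_val_map, List.ofFn_get]⟩

section

variable {n : ℕ}

theorem piMap_apply_eq_esymm (z : Fin n → ℂ) (k : Fin n) :
    piMap n z k = (univ.val.map z).esymm (k + 1) :=
  (Finset.esymm_map_val z univ _).symm

theorem differentiable_piMap : Differentiable ℂ (piMap n) := by
  unfold piMap
  fun_prop

theorem continuous_piMap : Continuous (piMap n) :=
  differentiable_piMap.continuous

/-- The monic polynomial `Xⁿ - y₀ Xⁿ⁻¹ + y₁ Xⁿ⁻² - ⋯ + (-1)ⁿ yₙ₋₁`, whose roots are the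
coordinates of the points of `piMap n ⁻¹' {y}`. -/
noncomputable def symPoly (n : ℕ) (y : Fin n → ℂ) : ℂ[X] :=
  X ^ n + ((degreeLTEquiv ℂ n).symm fun k => (-1) ^ (n - k : ℕ) * y k.rev : ℂ[X])

theorem monic_symPoly (y : Fin n → ℂ) : (symPoly n y).Monic :=
  monic_X_pow_add (mem_degreeLT.1 (Subtype.prop _))

theorem natDegree_symPoly (y : Fin n → ℂ) : (symPoly n y).natDegree = n := by
  rw [symPoly, natDegree_add_eq_left_of_degree_lt, natDegree_X_pow]
  rw [degree_X_pow]
  exact mem_degreeLT.1 (Subtype.prop _)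

theorem coeff_symPoly_of_lt (y : Fin n → ℂ) {k : ℕ} (hk : k < n) :
    (symPoly n y).coeff k = (-1) ^ (n - k) * y (Fin.rev ⟨k, hk⟩) := by
  rw [symPoly, coeff_add, coeff_X_pow, if_neg hk.ne, zero_add]
  exact congrFun ((degreeLTEquiv ℂ n).apply_symm_apply _) ⟨k, hk⟩

theorem symPoly_injective : Function.Injective (symPoly n) := by
  intro y w h
  funext i
  have hi := congrArg (coeff · (i.rev : ℕ)) h
  simp only [coeff_symPoly_of_lt _ i.rev.isLt, Fin.eta, Fin.rev_rev] at hi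
  exact mul_left_cancel₀ (pow_ne_zero _ (by norm_num)) hi

theorem prod_X_sub_C_eq_symPoly (z : Fin n → ℂ) :
    ((univ.val.map z).map fun a => X - C a).prod = symPoly n (piMap n z) := by
  have hcard : Multiset.card (univ.val.map z) = n := by simp
  ext k
  rcases lt_trichotomy k n with hk | rfl | hk
  · rw [Multiset.prod_X_sub_C_coeff _ (hk.le.trans hcard.ge), coeff_symPoly_of_lt _ hk,
      piMap_apply_eq_esymm, hcard]
    congr 3
    simp only [Fin.val_rev]
    omega
  · have hlead := (monic_symPoly (piMap _ z)).coeff_natDegree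
    rw [natDegree_symPoly] at hlead
    rw [hlead, Multiset.prod_X_sub_C_coeff _ hcard.ge, hcard, Nat.sub_self]
    simp [Multiset.esymm]
  · rw [coeff_eq_zero_of_natDegree_lt, coeff_eq_zero_of_natDegree_lt]
    · rwa [natDegree_symPoly]
    · rwa [natDegree_multiset_prod_X_sub_C_eq_card, hcard]

theorem univ_map_eq_of_piMap_eq {z w : Fin n → ℂ} (h : piMap n z = piMap n w) :
    univ.val.map z = univ.val.map w := by
  rw [← roots_multiset_prod_X_sub_C (univ.val.map z),
    ← roots_multiset_prod_X_sub_C (univ.val.map w), prod_X_sub_C_eq_symPoly,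
    prod_X_sub_C_eq_symPoly, h]

theorem sum_comp_eq_of_piMap_eq {M : Type*} [AddCommMonoid M] (f : ℂ → M) {z w : Fin n → ℂ}
    (h : piMap n z = piMap n w) : ∑ j, f (z j) = ∑ j, f (w j) := by
  simpa only [Multiset.map_map, Function.comp_def, Finset.sum_map_val] using
    congrArg (fun s => (s.map f).sum) (univ_map_eq_of_piMap_eq h)

theorem surjective_piMap : Function.Surjective (piMap n) := by
  intro y
  have hcard : Multiset.card (symPoly n y).roots = n :=
    (splits_iff_card_roots.1 (IsAlgClosed.splits _)).trans (natDegree_symPoly y)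
  obtain ⟨z, hz⟩ := Multiset.exists_univ_map_eq_of_card_eq hcard
  refine ⟨z, symPoly_injective ?_⟩
  rw [← prod_X_sub_C_eq_symPoly, hz]
  exact prod_multiset_X_sub_C_of_monic_of_roots_card_eq (monic_symPoly y)
    (hcard.trans (natDegree_symPoly y).symm)

theorem cauchyBound_symPoly_le (y : Fin n → ℂ) : cauchyBound (symPoly n y) ≤ ‖y‖₊ + 1 := by
  rw [cauchyBound, (monic_symPoly y).leadingCoeff, nnnorm_one, div_one, natDegree_symPoly]
  gcongr
  refine Finset.sup_le fun k hk => ?_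
  rw [coeff_symPoly_of_lt _ (Finset.mem_range.1 hk), nnnorm_mul, nnnorm_pow, nnnorm_neg,
    nnnorm_one, one_pow, one_mul]
  exact nnnorm_le_pi_nnnorm y _

theorem norm_lt_norm_piMap_add_one (z : Fin n → ℂ) : ‖z‖ < ‖piMap n z‖ + 1 := by
  suffices ‖z‖₊ < ‖piMap n z‖₊ + 1 by exact_mod_cast this
  refine (pi_nnnorm_lt_iff (by positivity)).2 fun j => ?_
  have hroot : (symPoly n (piMap n z)).IsRoot (z j) := by
    rw [← mem_roots (monic_symPoly _).ne_zero, ← prod_X_sub_C_eq_symPoly,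
      roots_multiset_prod_X_sub_C]
    exact Multiset.mem_map_of_mem z (Finset.mem_univ_val j)
  exact (hroot.norm_lt_cauchyBound (monic_symPoly _).ne_zero).trans_le (cauchyBound_symPoly_le _)

theorem isCompact_preimage_piMap {K : Set (Fin n → ℂ)} (hK : IsCompact K) :
    IsCompact (piMap n ⁻¹' K) := by
  obtain ⟨R, hR⟩ := hK.isBounded.subset_closedBall 0
  refine Metric.isCompact_of_isClosed_isBounded (hK.isClosed.preimage continuous_piMap)
    ((Metric.isBounded_closedBall (x := 0) (r := R + 1)).subset fun z hz => ?_)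
  have := mem_closedBall_zero_iff.1 (hR hz)
  rw [mem_closedBall_zero_iff]
  linarith [norm_lt_norm_piMap_add_one z]

theorem isProperMap_piMap : IsProperMap (piMap n) :=
  isProperMap_iff_isCompact_preimage.2 ⟨continuous_piMap, fun _ => isCompact_preimage_piMap⟩

theorem isOpen_ellipsoid {p : ℝ} (hp : 0 ≤ p) : IsOpen (ellipsoid p n) := by
  refine isOpen_lt (continuous_finsetSum _ fun j _ => ?_) continuous_const
  exact (continuous_apply j).norm.rpow_const fun _ => Or.inr (by positivity)

theorem preimage_image_piMap_ellipsoid (p : ℝ) :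
    piMap n ⁻¹' (piMap n '' ellipsoid p n) = ellipsoid p n := by
  refine (Set.subset_preimage_image _ _).antisymm' ?_
  rintro z ⟨w, hw, hwz⟩
  change ∑ j, ‖z j‖ ^ (2 * p) < 1
  rwa [sum_comp_eq_of_piMap_eq (‖·‖ ^ (2 * p)) hwz.symm]

end

theorem piMap_proper_general (n : ℕ) (p : ℝ) (hp : 0 < p) :
    IsProperHolomorphic (piMap n) (ellipsoid p n) (symEllipsoid p n) ∧
      piMap n '' ellipsoid p n = symEllipsoid p n ∧
      piMap n '' frontier (ellipsoid p n) = frontier (symEllipsoid p n) := by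
  have hsat := preimage_image_piMap_ellipsoid (n := n) p
  refine ⟨⟨differentiable_piMap.differentiableOn, Set.mapsTo_image _ _, fun K hK hKc => ?_⟩, rfl,
    isProperMap_piMap.isClosedMap.image_frontier_of_preimage_image_eq continuous_piMap
      surjective_piMap (isOpen_ellipsoid hp.le) hsat⟩
  rw [Set.inter_eq_right.2 ((Set.preimage_mono hK).trans hsat.subset)]
  exact isCompact_preimage_piMap hKc

/-- `π_n` restricted to `𝔹_{p,n}` is a proper holomorphic mapping onto
`𝔼_{p,n}`, and it maps the boundary onto the boundary. -/
theorem piMap_proper (n : ℕ) (hn : 2 ≤ n) (p : ℝ) (hp : 0 < p) :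
    IsProperHolomorphic (piMap n) (ellipsoid p n) (symEllipsoid p n) ∧
      piMap n '' ellipsoid p n = symEllipsoid p n ∧
      piMap n '' frontier (ellipsoid p n) = frontier (symEllipsoid p n) :=
  piMap_proper_general n p hp
end
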